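/- arXiv:2501.10585 — 2 statements merged into one kernel-verified Lean document; each statement's English description precedes it below -/
import Mathlib

section
/- Let π : T → [0,1] be a possibility contour with α-cuts C_α, let (K^β)_{β∈[0,1]} be a family of probability measures on T with K^β(C_β) = 1 for every β, and let M be a probability measure on [0,1] that is stochastically no smaller than Unif(0,1) (i.e., M([α,1]) ≥ 1−α for all α). Then the mixture Q(A) := ∫_0^1 K^β(A) dM(β) satisfies Q(C_α) ≥ 1−α for every α ∈ [0,1]. -/
open MeasureTheory Set

theorem measure_le_lintegral_of_one_le {α : Type*} [MeasurableSpace α] (μ : Measure α)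
    {s : Set α} (hs : MeasurableSet s) {f : α → ENNReal} (hf : ∀ x ∈ s, 1 ≤ f x) :
    μ s ≤ ∫⁻ x, f x ∂μ :=
  calc μ s = ∫⁻ _ in s, 1 ∂μ := (setLIntegral_one s).symm
    _ ≤ ∫⁻ x in s, f x ∂μ := setLIntegral_mono' hs hf
    _ ≤ ∫⁻ x, f x ∂μ := setLIntegral_le_lintegral s f

theorem mixture_in_credal_set_general {T : Type*} [MeasurableSpace T]
    (π : T → ℝ)
    (K : ℝ → Measure T)
    (hKsupp : ∀ β ∈ Set.Icc (0:ℝ) 1, K β {θ : T | β ≤ π θ} = 1)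
    (M : Measure ℝ)
    (hMdom : ∀ α ∈ Set.Icc (0:ℝ) 1, ENNReal.ofReal (1 - α) ≤ M (Set.Icc α 1)) :
    ∀ α ∈ Set.Icc (0:ℝ) 1,
      ENNReal.ofReal (1 - α) ≤ ∫⁻ β, K β {θ : T | α ≤ π θ} ∂M := by
  intro α hα
  have cut_full : ∀ β ∈ Icc α 1, 1 ≤ K β {θ : T | α ≤ π θ} := fun β hβ =>
    calc 1 = K β {θ : T | β ≤ π θ} := (hKsupp β ⟨hα.1.trans hβ.1, hβ.2⟩).symm
      _ ≤ K β {θ : T | α ≤ π θ} := measure_mono fun θ hθ => hβ.1.trans hθ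
  exact (hMdom α hα).trans (measure_le_lintegral_of_one_le M measurableSet_Icc cut_full)

/-- Sufficiency direction of the credal-set characterization: a mixture of
probability kernels supported on the α-cuts, over a mixing distribution
stochastically no smaller than Unif(0,1), assigns mass ≥ 1-α to each α-cut. -/
theorem mixture_in_credal_set {T : Type*} [MeasurableSpace T] [Nonempty T]
    (π : T → ℝ) (hπ : Measurable π) (hrange : ∀ θ, π θ ∈ Set.Icc (0:ℝ) 1)
    (hsup : ⨆ θ, π θ = 1)
    (hcut : ∀ α : ℝ, MeasurableSet {θ : T | α ≤ π θ})
    (K : ℝ → Measure T) (hKprob : ∀ β, IsProbabilityMeasure (K β))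
    (hKmeas : ∀ A : Set T, MeasurableSet A → Measurable fun β => K β A)
    (hKsupp : ∀ β ∈ Set.Icc (0:ℝ) 1, K β {θ : T | β ≤ π θ} = 1)
    (M : Measure ℝ) [IsProbabilityMeasure M] (hMsupp : M (Set.Icc (0:ℝ) 1) = 1)
    (hMdom : ∀ α ∈ Set.Icc (0:ℝ) 1, ENNReal.ofReal (1 - α) ≤ M (Set.Icc α 1)) :
    ∀ α ∈ Set.Icc (0:ℝ) 1,
      ENNReal.ofReal (1 - α) ≤ ∫⁻ β, K β {θ : T | α ≤ π θ} ∂M :=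
  mixture_in_credal_set_general π K hKsupp M hMdom
end

section
/- Let π : T → [0,1] with sup π = 1, α-cuts C_α = {θ : π(θ) ≥ α}, and let Q be a probability measure with Q(C_α) ≥ 1−α for all α ∈ [0,1]. Then for every measurable H ⊆ T, Q(H) ≤ sup_{θ∈H} π(θ) = Π̄(H). -/
open MeasureTheory Set

/-- Credal-set characterization, converse direction: if a probability measure
Q assigns mass ≥ 1-α to each α-cut, then Q is dominated by the possibility
measure Π̄(H) = sup_{θ∈H} π(θ). -/
theorem confidence_implies_dominated {T : Type*} [MeasurableSpace T] [Nonempty T]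
    (π : T → ℝ) (hπ : Measurable π) (hrange : ∀ θ, π θ ∈ Set.Icc (0:ℝ) 1)
    (hsup : ⨆ θ, π θ = 1)
    (hcut : ∀ α : ℝ, MeasurableSet {θ : T | α ≤ π θ})
    (Q : Measure T) [IsProbabilityMeasure Q]
    (hconf : ∀ α ∈ Set.Icc (0:ℝ) 1, 1 - α ≤ (Q {θ : T | α ≤ π θ}).toReal) :
    ∀ H : Set T, MeasurableSet H → (Q H).toReal ≤ ⨆ θ ∈ H, π θ := by
  intro H hH
  rcases H.eq_empty_or_nonempty with rfl | ⟨θ0, hθ0⟩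
  · simp
  set s := ⨆ θ ∈ H, π θ with hs
  have hbd : BddAbove (Set.range fun θ => ⨆ _ : θ ∈ H, π θ) := by
    refine ⟨1, ?_⟩
    rintro x ⟨θ, rfl⟩
    exact Real.iSup_le (fun h => (hrange θ).2) zero_le_one
  have key : ∀ θ ∈ H, π θ ≤ s := by
    intro θ hθ
    have h1 : π θ ≤ ⨆ _ : θ ∈ H, π θ :=
      le_ciSup (f := fun _ : θ ∈ H => π θ)
        ⟨π θ, by rintro x ⟨_, rfl⟩; exact le_rfl⟩ hθ
    exact h1.trans (le_ciSup hbd θ)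
  have hs0 : 0 ≤ s := (hrange θ0).1.trans (key θ0 hθ0)
  have hQ1 : (Q H).toReal ≤ 1 := by
    have := prob_le_one (μ := Q) (s := H)
    simpa using ENNReal.toReal_mono ENNReal.one_ne_top this
  refine le_of_forall_gt_imp_ge_of_dense ?_
  intro t ht
  by_cases hto : t ≤ 1
  · have hsub : H ⊆ {θ | π θ < t} := fun θ hθ => lt_of_le_of_lt (key θ hθ) ht
    have hcompl : {θ : T | π θ < t} = {θ : T | t ≤ π θ}ᶜ := by
      ext θ; simp [not_le]
    have hmono : (Q H).toReal ≤ (Q {θ | π θ < t}).toReal :=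
      ENNReal.toReal_mono (measure_ne_top Q _) (measure_mono hsub)
    have hc : (Q {θ : T | π θ < t}).toReal = 1 - (Q {θ : T | t ≤ π θ}).toReal := by
      rw [hcompl, prob_compl_eq_one_sub (hcut t),
        ENNReal.toReal_sub_of_le prob_le_one ENNReal.one_ne_top, ENNReal.toReal_one]
    have ht0 : 0 ≤ t := hs0.trans ht.le
    have := hconf t ⟨ht0, hto⟩
    have : 1 - (Q {θ : T | t ≤ π θ}).toReal ≤ t := by linarith
    linarith [hmono, hc ▸ hmono]
  · exact hQ1.trans (le_of_not_ge hto)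
end
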